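/- arXiv:2510.27290 — 2 statements merged into one kernel-verified Lean document; each statement's English description precedes it below -/
import Mathlib

section
/- Let 𝔟 ≥ 1 and let Y ⊆ 𝔟^ℤ be the subshift of finite type described by forbidden patterns p_1,…,p_k, all of length L. If there exists a Borel equivariant map from F(2^ℤ) to Y, then for every n ≥ L there exists N such that for all integers p, q > N there are elements y_1, y_2 ∈ Y with y_1(m+p) = y_1(m) for all m ∈ ℤ, y_2(m+q) = y_2(m) for all m ∈ ℤ, and y_1(i) = y_2(i) for all 0 ≤ i < n. -/
/-- The shift action of `ℤ` on `α^ℤ`: `(s · x)(n) = x(n + s)`. -/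
def shift {α : Type*} (s : ℤ) (x : ℤ → α) : ℤ → α := fun n => x (n + s)

/-- The free part `F(2^ℤ)` of the shift action on `2^ℤ = (ℤ → Bool)`. -/
def FreePart : Set (ℤ → Bool) := {x | ∀ s : ℤ, s ≠ 0 → shift s x ≠ x}

/-- The pattern `p` (of length `L`) occurs in `y ∈ b^ℤ`. -/
def Occurs {b L : ℕ} (p : Fin L → Fin b) (y : ℤ → Fin b) : Prop :=
  ∃ m : ℤ, ∀ i : Fin L, y (m + (i : ℤ)) = p i

/-- The subshift of finite type described by `(b; P 0, …, P (k-1))`: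
the set of points of `b^ℤ` in which none of the forbidden patterns occurs. -/
def SFT {b L k : ℕ} (P : Fin k → Fin L → Fin b) : Set (ℤ → Fin b) :=
  {y | ∀ j : Fin k, ¬ Occurs (P j) y}

/-- `f : F(2^ℤ) → Y` is equivariant: `f(s · x) = s · f(x)`. -/
def EquivariantOn {b : ℕ} (Y : Set (ℤ → Fin b))
    (f : {x : ℤ → Bool // x ∈ FreePart} → {y : ℤ → Fin b // y ∈ Y}) : Prop :=
  ∀ (x : {x : ℤ → Bool // x ∈ FreePart}) (s : ℤ) (h : shift s x.1 ∈ FreePart),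
    (f ⟨shift s x.1, h⟩ : ℤ → Fin b) = shift s (f x : ℤ → Fin b)

/-!
Equip `2^ℤ` with the fair-coin Bernoulli measure. Its shift is mixing: measurable sets are
approximated by cylinders, and a cylinder is independent of its far translates. Hence the free part
is conull, since a set of `s`-periodic points of positive measure would contradict mixing. Colour
each free point `x` by the word `f(x)|[0,n)`. Some colour class `A` has positive measure, so by
mixing `A ∩ shift⁻ᵖ A ≠ ∅` for every large `p`; by equivariance `y = f(x)` then repeats its first
`n ≥ L` letters at distance `p`, and the `p`-periodic point with period word `y|[0,p)` still avoids
the forbidden patterns. Doing this for `p` and for `q` with the same colour gives `y₁` and `y₂`.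
-/
open MeasureTheory ProbabilityTheory Filter Set Function
open scoped symmDiff Topology

section Periodize

variable {β : Type*}

def periodize (p : ℕ) (y : ℤ → β) : ℤ → β := fun m ↦ y (m % p)

theorem periodize_periodic (p : ℕ) (y : ℤ → β) : Periodic (periodize p y) p := by
  intro m
  simp [periodize]

theorem periodize_apply_of_lt {p : ℕ} (y : ℤ → β) {m : ℤ} (h₀ : 0 ≤ m) (hm : m < p) :
    periodize p y m = y m := by
  rw [periodize, Int.emod_eq_of_lt h₀ hm]

theorem periodize_apply_of_lt_add {p L : ℕ} {y : ℤ → β} (hLp : L ≤ p)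
    (hret : ∀ i : ℕ, i < L → y (i + p) = y i) {m : ℤ} (h₀ : 0 ≤ m) (hm : m < p + L) :
    periodize p y m = y m := by
  rcases lt_or_ge m p with hmp | hpm
  · exact periodize_apply_of_lt y h₀ hmp
  · obtain ⟨t, ht⟩ := Int.eq_ofNat_of_zero_le (sub_nonneg.mpr hpm)
    rw [show m = t + p by omega, periodize_periodic, hret t (by omega),
      periodize_apply_of_lt y (by omega) (by omega)]

theorem periodize_mem_SFT {b L k : ℕ} {P : Fin k → Fin L → Fin b} {y : ℤ → Fin b}
    (hy : y ∈ SFT P) {p : ℕ} (hp : 0 < p) (hLp : L ≤ p)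
    (hret : ∀ i : ℕ, i < L → y (i + p) = y i) : periodize p y ∈ SFT P := by
  rintro j ⟨m, hm⟩
  refine hy j ⟨m % p, fun i ↦ ?_⟩
  have h₀ : 0 ≤ m % p := Int.emod_nonneg m (by omega)
  have h₁ : m % p < p := Int.emod_lt_of_pos m (by omega)
  rw [← hm i, ← periodize_apply_of_lt_add hLp hret (by omega) (by omega), periodize, periodize,
    Int.emod_add_emod]

end Periodize

theorem abs_mul_sub_mul_le {a b c d : ℝ} (ha₀ : 0 ≤ a) (ha₁ : a ≤ 1) (hd₀ : 0 ≤ d)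
    (hd₁ : d ≤ 1) : |c * d - a * b| ≤ |c - a| + |d - b| :=
  calc |c * d - a * b| = |(c - a) * d + a * (d - b)| := by ring_nf
    _ ≤ |c - a| * |d| + |a| * |d - b| := by rw [← abs_mul, ← abs_mul]; exact abs_add_le _ _
    _ ≤ |c - a| * 1 + 1 * |d - b| := by
        gcongr
        · rwa [abs_of_nonneg hd₀]
        · rwa [abs_of_nonneg ha₀]
    _ = |c - a| + |d - b| := by ring

theorem abs_measureReal_inter_sub_le {Ω : Type*} [MeasurableSpace Ω] (μ : Measure Ω)
    [IsFiniteMeasure μ] {A B C D : Set Ω} (hA : MeasurableSet A) (hB : MeasurableSet B)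
    (hC : MeasurableSet C) (hD : MeasurableSet D) :
    |μ.real (A ∩ B) - μ.real (C ∩ D)| ≤ μ.real (A ∆ C) + μ.real (B ∆ D) := by
  have hsub : (A ∩ B) ∆ (C ∩ D) ⊆ A ∆ C ∪ B ∆ D := by
    intro x
    simp only [mem_symmDiff, mem_inter_iff, mem_union]
    tauto
  calc |μ.real (A ∩ B) - μ.real (C ∩ D)| ≤ μ.real ((A ∩ B) ∆ (C ∩ D)) :=
        abs_measureReal_sub_le_measureReal_symmDiff (hA.inter hB).nullMeasurableSet
          (hC.inter hD).nullMeasurableSet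
    _ ≤ μ.real (A ∆ C ∪ B ∆ D) := measureReal_mono hsub
    _ ≤ μ.real (A ∆ C) + μ.real (B ∆ D) := measureReal_union_le _ _

theorem exists_mem_measurableCylinders_measureReal_symmDiff_lt {ι : Type*} {X : ι → Type*}
    [∀ i, MeasurableSpace (X i)] {μ : Measure (∀ i, X i)} [IsFiniteMeasure μ]
    {A : Set (∀ i, X i)} (hA : MeasurableSet A) {ε : ℝ} (hε : 0 < ε) :
    ∃ C ∈ measurableCylinders X, μ.real (C ∆ A) < ε := by
  obtain ⟨C, hC, hCA⟩ := exists_measure_symmDiff_lt_of_generateFrom_isSetRing (μ := μ)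
    isSetRing_measurableCylinders
    ⟨{univ}, countable_singleton _, by simpa using univ_mem_measurableCylinders X, by simp⟩
    generateFrom_measurableCylinders.symm hA (ENNReal.ofReal_pos.mpr hε)
  exact ⟨C, hC, ENNReal.toReal_lt_of_lt_ofReal hCA⟩

theorem indep_cylinderEvents_infinitePi {ι : Type*} {X : ι → Type*} [∀ i, MeasurableSpace (X i)]
    (μ : ∀ i, Measure (X i)) [∀ i, IsProbabilityMeasure (μ i)] {Δ₁ Δ₂ : Set ι}
    (h : Disjoint Δ₁ Δ₂) :
    Indep (cylinderEvents Δ₁) (cylinderEvents Δ₂) (Measure.infinitePi μ) :=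
  indep_iSup_of_disjoint (fun i ↦ (measurable_pi_apply i).comap_le)
    (iIndepFun_infinitePi (X := fun _ ↦ id) fun _ ↦ measurable_id) h

section BernoulliShift

variable {α : Type*} [MeasurableSpace α]

noncomputable abbrev bernoulliShift (ν : Measure α) [IsProbabilityMeasure ν] : Measure (ℤ → α) :=
  Measure.infinitePi fun _ ↦ ν

theorem measurePreserving_shift (ν : Measure α) [IsProbabilityMeasure ν] (s : ℤ) :
    MeasurePreserving (shift s) (bernoulliShift ν) (bernoulliShift ν) :=
  ⟨by unfold shift; fun_prop, Measure.map_infinitePi_infinitePi_of_inj (add_left_injective s)⟩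

theorem measurableSet_cylinderEvents_shift_preimage {Δ : Set ℤ} {D : Set (ℤ → α)}
    (hD : MeasurableSet[cylinderEvents Δ] D) (p : ℤ) :
    MeasurableSet[cylinderEvents ((· - p) ⁻¹' Δ)] (shift p ⁻¹' D) := by
  refine measurable_cylinderEvents_iff.mpr (fun i hi ↦ ?_) hD
  exact measurable_cylinderEvent_apply (i := i + p) (by simpa using hi)

theorem exists_measurableSet_cylinderEvents_Icc {C : Set (ℤ → α)}
    (hC : C ∈ measurableCylinders fun _ : ℤ ↦ α) :
    ∃ W : ℕ, MeasurableSet[cylinderEvents (Icc (-W : ℤ) W)] C := by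
  obtain ⟨s, S, hS, rfl⟩ := (mem_measurableCylinders C).mp hC
  set W := s.sup Int.natAbs
  have hs (i : s) : (i : ℤ) ∈ Icc (-W : ℤ) W := by
    have := Finset.le_sup (f := Int.natAbs) i.2
    simp only [mem_Icc]; omega
  have hrestrict :
      Measurable[cylinderEvents (X := fun _ : ℤ ↦ α) (Icc (-W : ℤ) W)] s.restrict := by
    rw [@measurable_pi_iff]; exact fun i ↦ measurable_cylinderEvent_apply (hs i)
  exact ⟨W, hrestrict hS⟩

variable (ν : Measure α) [IsProbabilityMeasure ν]

theorem eventually_measure_inter_shift_preimage_eq_mul {C D : Set (ℤ → α)}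
    (hC : C ∈ measurableCylinders fun _ : ℤ ↦ α) (hD : D ∈ measurableCylinders fun _ : ℤ ↦ α) :
    ∀ᶠ p in atTop, bernoulliShift ν (C ∩ shift p ⁻¹' D) =
      bernoulliShift ν C * bernoulliShift ν D := by
  obtain ⟨W₁, hC'⟩ := exists_measurableSet_cylinderEvents_Icc hC
  obtain ⟨W₂, hD'⟩ := exists_measurableSet_cylinderEvents_Icc hD
  filter_upwards [eventually_gt_atTop ((W₁ + W₂ : ℕ) : ℤ)] with p hp
  have hdisj : Disjoint (Icc (-W₁ : ℤ) W₁) ((· - p) ⁻¹' Icc (-W₂ : ℤ) W₂) := by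
    rw [Set.disjoint_left]
    intro i h₁ h₂
    simp only [mem_Icc, mem_preimage] at h₁ h₂
    omega
  rw [(Indep_iff _ _ _).mp (indep_cylinderEvents_infinitePi _ hdisj) _ _ hC'
    (measurableSet_cylinderEvents_shift_preimage hD' p),
    (measurePreserving_shift ν p).measure_preimage (cylinderEvents_le_pi _ hD').nullMeasurableSet]

theorem tendsto_measureReal_inter_shift_preimage {A B : Set (ℤ → α)} (hA : MeasurableSet A)
    (hB : MeasurableSet B) :
    Tendsto (fun p ↦ (bernoulliShift ν).real (A ∩ shift p ⁻¹' B)) atTop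
      (𝓝 ((bernoulliShift ν).real A * (bernoulliShift ν).real B)) := by
  set μ := bernoulliShift ν
  rw [Metric.tendsto_nhds]
  intro ε hε
  obtain ⟨C, hC, hCA⟩ :=
    exists_mem_measurableCylinders_measureReal_symmDiff_lt (μ := μ) hA (ε := ε / 4) (by positivity)
  obtain ⟨D, hD, hDB⟩ :=
    exists_mem_measurableCylinders_measureReal_symmDiff_lt (μ := μ) hB (ε := ε / 4) (by positivity)
  have hCm := MeasurableSet.of_mem_measurableCylinders hC
  have hDm := MeasurableSet.of_mem_measurableCylinders hD
  filter_upwards [eventually_measure_inter_shift_preimage_eq_mul ν hC hD] with p hp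
  have hmeas := (measurePreserving_shift ν p).measurable
  have hinter : |μ.real C * μ.real D - μ.real (A ∩ shift p ⁻¹' B)| ≤
      μ.real (C ∆ A) + μ.real (D ∆ B) := by
    change μ (C ∩ shift p ⁻¹' D) = μ C * μ D at hp
    have hshift : μ.real ((shift p ⁻¹' D) ∆ (shift p ⁻¹' B)) = μ.real (D ∆ B) := by
      rw [← preimage_symmDiff]
      exact (measurePreserving_shift ν p).measureReal_preimage (hDm.symmDiff hB).nullMeasurableSet
    have h := abs_measureReal_inter_sub_le μ hCm (hmeas hDm) hA (hmeas hB)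
    rwa [measureReal_def, hp, ENNReal.toReal_mul, hshift] at h
  have hprod : |μ.real C * μ.real D - μ.real A * μ.real B| ≤ μ.real (C ∆ A) + μ.real (D ∆ B) :=
    (abs_mul_sub_mul_le measureReal_nonneg measureReal_le_one measureReal_nonneg
      measureReal_le_one).trans <| add_le_add
        (abs_measureReal_sub_le_measureReal_symmDiff hCm.nullMeasurableSet hA.nullMeasurableSet)
        (abs_measureReal_sub_le_measureReal_symmDiff hDm.nullMeasurableSet hB.nullMeasurableSet)
  calc dist (μ.real (A ∩ shift p ⁻¹' B)) (μ.real A * μ.real B)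
      ≤ dist (μ.real C * μ.real D) (μ.real (A ∩ shift p ⁻¹' B)) +
          dist (μ.real C * μ.real D) (μ.real A * μ.real B) := dist_triangle_left _ _ _
    _ ≤ (μ.real (C ∆ A) + μ.real (D ∆ B)) + (μ.real (C ∆ A) + μ.real (D ∆ B)) :=
        add_le_add hinter hprod
    _ < ε := by linarith

theorem eventually_nonempty_inter_shift_preimage {A B : Set (ℤ → α)} (hA : MeasurableSet A)
    (hB : MeasurableSet B) (hA₀ : bernoulliShift ν A ≠ 0) (hB₀ : bernoulliShift ν B ≠ 0) :
    ∀ᶠ p in atTop, (A ∩ shift p ⁻¹' B).Nonempty := by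
  have hpos : 0 < (bernoulliShift ν).real A * (bernoulliShift ν).real B :=
    mul_pos (ENNReal.toReal_pos hA₀ (measure_ne_top _ _))
      (ENNReal.toReal_pos hB₀ (measure_ne_top _ _))
  filter_upwards [(tendsto_measureReal_inter_shift_preimage ν hA hB).eventually_const_lt hpos]
    with p hp
  exact nonempty_of_measure_ne_zero ((measureReal_ne_zero_iff).mp hp.ne')

theorem measurableSet_setOf_periodic [MeasurableEq α] (s : ℤ) :
    MeasurableSet {x : ℤ → α | Periodic x s} := by
  have h : {x : ℤ → α | Periodic x s} = ⋂ n, {x | x (n + s) = x n} := by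
    ext x
    simp [Periodic]
  rw [h]
  exact .iInter fun n ↦ measurableSet_eq_fun (measurable_pi_apply _) (measurable_pi_apply _)

theorem measure_setOf_periodic_eq_zero [MeasurableEq α] {S : Set α} (hS : MeasurableSet S)
    (hS₀ : ν S ≠ 0) (hS₁ : ν Sᶜ ≠ 0) {s : ℤ} (hs : s ≠ 0) :
    bernoulliShift ν {x | Periodic x s} = 0 := by
  set Per := {x : ℤ → α | Periodic x s}
  have hPer := measurableSet_setOf_periodic (α := α) s
  by_contra h
  -- Mix `Per ∩ {x | x 0 ∈ T}` with `{x | x 0 ∉ T}` at a multiple of `s`.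
  obtain ⟨T, hT, hPT, hTc⟩ : ∃ T : Set α, MeasurableSet T ∧
      bernoulliShift ν (Per ∩ eval 0 ⁻¹' T) ≠ 0 ∧ ν Tᶜ ≠ 0 := by
    by_cases hPS : bernoulliShift ν (Per ∩ eval 0 ⁻¹' S) = 0
    · refine ⟨Sᶜ, hS.compl, fun hPSc ↦ h ?_, by rwa [compl_compl]⟩
      rw [← inter_union_compl Per (eval 0 ⁻¹' S), ← preimage_compl]
      exact measure_union_null hPS hPSc
    · exact ⟨S, hS, hPS, hS₁⟩
  obtain ⟨N, hN⟩ := (eventually_nonempty_inter_shift_preimage ν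
    (hPer.inter (measurable_pi_apply 0 hT)) (measurable_pi_apply 0 hT.compl) hPT
    (by rwa [(measurePreserving_eval_infinitePi _ 0).measure_preimage hT.compl.nullMeasurableSet]))
    |>.exists_forall_of_atTop
  have hss : 1 ≤ s * s := by have := mul_self_pos.mpr hs; omega
  obtain ⟨x, ⟨hx, hx₀⟩, hxp⟩ :=
    hN (|N| * s * s) ((le_abs_self N).trans (by nlinarith [abs_nonneg N]))
  have hxp' : x (|N| * s * s) ∉ T := by simpa [shift] using hxp
  exact hxp' ((hx.int_mul_eq (|N| * s)).symm ▸ hx₀)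

end BernoulliShift

theorem measurableSet_freePart : MeasurableSet FreePart := by
  have h : FreePart = ⋂ (s : ℤ) (_ : s ≠ 0), {x : ℤ → Bool | Periodic x s}ᶜ := by
    ext x
    simp [FreePart, Periodic, funext_iff, shift]
  rw [h]
  exact .iInter fun s ↦ .iInter fun _ ↦ (measurableSet_setOf_periodic s).compl

theorem measure_freePart_compl :
    bernoulliShift (uniformOn univ : Measure Bool) FreePartᶜ = 0 := by
  have h : FreePartᶜ ⊆ ⋃ s : {s : ℤ // s ≠ 0}, {x : ℤ → Bool | Periodic x s} := by
    intro x hx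
    simpa [FreePart, Periodic, funext_iff, shift] using hx
  have hpos {t : Set Bool} (ht : t.Nonempty) : (uniformOn univ : Measure Bool) t ≠ 0 := by
    rw [Ne, uniformOn_eq_zero_iff finite_univ, univ_inter]
    exact ht.ne_empty
  exact measure_mono_null h <| measure_iUnion_null fun s ↦
    measure_setOf_periodic_eq_zero _ (measurableSet_singleton true) (hpos ⟨true, rfl⟩)
      (hpos ⟨false, by simp⟩) s.2

theorem exists_eventually_return_freePart {γ : Type*} [MeasurableSpace γ]
    [MeasurableSingletonClass γ] [Countable γ] {c : {x : ℤ → Bool // x ∈ FreePart} → γ}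
    (hc : Measurable c) :
    ∃ u, ∀ᶠ p in atTop, ∃ x : {x : ℤ → Bool // x ∈ FreePart},
      ∃ hx : shift p x.1 ∈ FreePart, c x = u ∧ c ⟨shift p x.1, hx⟩ = u := by
  set μ := bernoulliShift (uniformOn univ : Measure Bool)
  set E : γ → Set (ℤ → Bool) := fun u ↦ Subtype.val '' (c ⁻¹' {u})
  have hE (u : γ) : MeasurableSet (E u) :=
    measurableSet_freePart.subtype_image (hc (measurableSet_singleton u))
  have hcover : FreePart ⊆ ⋃ u, E u := fun x hx ↦ mem_iUnion.mpr ⟨c ⟨x, hx⟩, ⟨x, hx⟩, rfl, rfl⟩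
  have hfree : μ FreePart ≠ 0 := by
    rw [prob_compl_eq_zero_iff measurableSet_freePart |>.mp measure_freePart_compl]
    exact one_ne_zero
  obtain ⟨u, hu⟩ := exists_measure_pos_of_not_measure_iUnion_null
    fun h ↦ hfree (measure_mono_null hcover h)
  refine ⟨u, (eventually_nonempty_inter_shift_preimage _ (hE u) (hE u) hu.ne' hu.ne').mono ?_⟩
  rintro p ⟨_, ⟨x, hxu, rfl⟩, x', hx'u, hx'⟩
  refine ⟨x, hx' ▸ x'.2, hxu, ?_⟩
  rwa [show (⟨shift p x.1, _⟩ : {x // x ∈ FreePart}) = x' from Subtype.ext hx'.symm]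

theorem borel_equivariant_map_gives_periodic_points_for_large_periods_general
    (b L k : ℕ) (P : Fin k → Fin L → Fin b)
    (hf : ∃ f : {x : ℤ → Bool // x ∈ FreePart} → {y : ℤ → Fin b // y ∈ SFT P},
       Measurable f ∧ EquivariantOn (SFT P) f) :
    ∀ n : ℕ, L ≤ n → ∃ N : ℕ, ∀ p q : ℕ, N < p → N < q →
      ∃ y₁ ∈ SFT P, ∃ y₂ ∈ SFT P,
        (∀ m : ℤ, y₁ (m + (p : ℤ)) = y₁ m) ∧
        (∀ m : ℤ, y₂ (m + (q : ℤ)) = y₂ m) ∧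
        (∀ i : ℕ, i < n → y₁ (i : ℤ) = y₂ (i : ℤ)) := by
  obtain ⟨f, hfm, hfe⟩ := hf
  intro n hLn
  obtain ⟨u, hu⟩ := exists_eventually_return_freePart
    (c := fun x (i : Fin n) ↦ (f x).1 i)
    (measurable_pi_lambda _ fun i ↦ (measurable_pi_apply _).comp (measurable_subtype_coe.comp hfm))
  obtain ⟨N, hN⟩ := hu.exists_forall_of_atTop
  have hperiodic (p : ℕ) (hp : max n N.toNat < p) :
      ∃ y ∈ SFT P, Periodic y p ∧ ∀ i (hi : i < n), y i = u ⟨i, hi⟩ := by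
    obtain ⟨x, hx, hxu, hpxu⟩ := hN p (by omega)
    rw [hfe x p hx] at hpxu
    have hret (i : ℕ) (hi : i < n) : (f x).1 (i + p) = (f x).1 i :=
      (congrFun hpxu ⟨i, hi⟩).trans (congrFun hxu ⟨i, hi⟩).symm
    refine ⟨periodize p (f x).1, periodize_mem_SFT (f x).2 (by omega) (by omega)
      (fun i hi ↦ hret i (by omega)), periodize_periodic _ _, fun i hi ↦ ?_⟩
    rw [periodize_apply_of_lt _ (by omega) (by omega), ← congrFun hxu ⟨i, hi⟩]
  refine ⟨max n N.toNat, fun p q hp hq ↦ ?_⟩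
  obtain ⟨y₁, hy₁, hper₁, hu₁⟩ := hperiodic p hp
  obtain ⟨y₂, hy₂, hper₂, hu₂⟩ := hperiodic q hq
  exact ⟨y₁, hy₁, y₂, hy₂, hper₁, hper₂, fun i hi ↦ (hu₁ i hi).trans (hu₂ i hi).symm⟩

/-- If there is a Borel equivariant map `F(2^ℤ) → Y`, then for every
`n ≥ L` and all sufficiently large `p, q` there are points `y₁, y₂ ∈ Y` of periods
`p` and `q` respectively that agree on `[0, n)`. -/
theorem borel_equivariant_map_gives_periodic_points_for_large_periods
    (b L k : ℕ) (hb : 1 ≤ b) (hL : 1 ≤ L) (P : Fin k → Fin L → Fin b)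
    (hf : ∃ f : {x : ℤ → Bool // x ∈ FreePart} → {y : ℤ → Fin b // y ∈ SFT P},
       Measurable f ∧ EquivariantOn (SFT P) f) :
    ∀ n : ℕ, L ≤ n → ∃ N : ℕ, ∀ p q : ℕ, N < p → N < q →
      ∃ y₁ ∈ SFT P, ∃ y₂ ∈ SFT P,
        (∀ m : ℤ, y₁ (m + (p : ℤ)) = y₁ m) ∧
        (∀ m : ℤ, y₂ (m + (q : ℤ)) = y₂ m) ∧
        (∀ i : ℕ, i < n → y₁ (i : ℤ) = y₂ (i : ℤ)) :=
  borel_equivariant_map_gives_periodic_points_for_large_periods_general b L k P hf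
end

section
/- Let S = {±a_1,…,±a_n} where 0 < a_1 < … < a_n and gcd(a_1,…,a_n) = 1, and let m ≥ 1 be an integer. If no element of {a_1,…,a_n} is divisible by m+1 (i.e., S ∩ (m+1)ℤ = ∅), then χ(a_1,…,a_n) ≤ m + 2, i.e., there exists a Borel proper (m+2)-coloring of the Schreier graph G_S on F(2^ℤ). -/
/-- `c` is a Borel proper coloring of the Schreier graph `G_S` on `F(2^ℤ)`,
where `S = {±a : a ∈ A}`: `c` is Borel and `c(x) ≠ c(s · x)` for all `x` and `s ∈ S`. -/
def IsBorelColoring (A : Finset ℕ) {k : ℕ}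
    (c : {x : ℤ → Bool // x ∈ FreePart} → Fin k) : Prop :=
  Measurable c ∧
    ∀ (x : {x : ℤ → Bool // x ∈ FreePart}) (a : ℕ), a ∈ A →
      ∀ (h : shift (a : ℤ) x.1 ∈ FreePart), c x ≠ c ⟨shift (a : ℤ) x.1, h⟩

/-- The Borel chromatic number `χ(a₁, …, aₙ)` of the Schreier graph `G_S` on `F(2^ℤ)`,
where `S = {±a : a ∈ A}`: the least `k` admitting a Borel proper `k`-coloring. -/
noncomputable def borelChromatic (A : Finset ℕ) : ℕ :=
  sInf {k : ℕ | ∃ c : {x : ℤ → Bool // x ∈ FreePart} → Fin k, IsBorelColoring A c}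

/-!
Let `q = m + 1` and `L = max A`. Choose a Borel set of markers, one in every `N`-window of each
orbit and any two more than `N = (q² + 1)L` apart, and colour a point by its position `d` in its
gap between consecutive markers and by the gap length `g`. Colouring `d` by `d mod q` is proper
for every `a ∈ A` since `q ∤ a`; for the colours at the end of a gap to continue those restarted
at the next marker, the phase is raised `R ≡ -g (mod q)` times by one. Each raise is done one
residue class at a time, the classes `L` apart, and the only pairs it makes monochromatic (at
distance `≡ ±1 (mod q)`) have an end `≡ 0 (mod q)` in the raising zone; these positions, the
stars, get the extra colour. The markers are chosen greedily along a countable basis of open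
sets disjoint from their `N` nearest translates.
-/

/-- `gapPhase q L d` counts the raises passed by `d`: a position of residue `u` passes raise `i`
from `((i + 1) * q - u) * L` on. -/
def gapPhase (q L d : ℕ) : ℕ := (d / L + d % q) / q

def IsGapStar (q L R d : ℕ) : Prop := d % q = 0 ∧ d < R * q * L

instance (q L R d : ℕ) : Decidable (IsGapStar q L R d) := inferInstanceAs (Decidable (_ ∧ _))

/-- `none` is the extra colour. -/
def gapColor (q L R d : ℕ) : Option (ZMod q) :=
  if IsGapStar q L R d then none else some ((d + min R (gapPhase q L d) : ℕ) : ZMod q)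

section GapColor

variable {q L R a d : ℕ}

lemma Nat.div_le_div_add_one_of_le_add {x y n : ℕ} (hn : 0 < n) (h : x ≤ y + n) :
    x / n ≤ y / n + 1 :=
  (Nat.div_le_div_right h).trans (Nat.add_div_right y hn).le

lemma Nat.add_div_le_div_add_one (hL : 0 < L) (ha : a ≤ L) : (d + a) / L ≤ d / L + 1 :=
  Nat.div_le_div_add_one_of_le_add hL (by omega)

lemma gapPhase_add_le (hq : 0 < q) (hL : 0 < L) (ha : a ≤ L) :
    gapPhase q L (d + a) ≤ gapPhase q L d + 1 := by
  have := Nat.add_div_le_div_add_one (d := d) hL ha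
  have := Nat.mod_lt (d + a) hq
  exact Nat.div_le_div_add_one_of_le_add hq (by omega)

lemma gapPhase_le_add (hq : 0 < q) : gapPhase q L d ≤ gapPhase q L (d + a) + 1 := by
  have : d / L ≤ (d + a) / L := Nat.div_le_div_right (Nat.le_add_right d a)
  have := Nat.mod_lt d hq
  exact Nat.div_le_div_add_one_of_le_add hq (by omega)

lemma Nat.add_mod_of_dvd_add_one (hq : 0 < q) (h : q ∣ a + 1) (hd : d % q ≠ 0) :
    (d + a) % q = d % q - 1 := by
  obtain ⟨t, ht⟩ := h
  have := Nat.div_add_mod d q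
  have := Nat.mod_lt d hq
  rw [show d + a = q * (d / q + t) + (d % q - 1) by rw [mul_add]; omega, Nat.mul_add_mod,
    Nat.mod_eq_of_lt (by omega)]

lemma Nat.add_mod_of_dvd_sub_one (ha : 1 ≤ a) (h : q ∣ a - 1) :
    (d + a) % q = (d % q + 1) % q := by
  obtain ⟨t, ht⟩ := h
  have := Nat.div_add_mod d q
  rw [show d + a = q * (d / q + t) + (d % q + 1) by rw [mul_add]; omega, Nat.mul_add_mod]

lemma gapPhase_add_le_of_dvd_add_one (hq : 0 < q) (hL : 0 < L) (ha : a ≤ L) (h : q ∣ a + 1)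
    (hd : d % q ≠ 0) : gapPhase q L (d + a) ≤ gapPhase q L d := by
  have := Nat.add_mod_of_dvd_add_one hq h hd
  have := Nat.add_div_le_div_add_one (d := d) hL ha
  exact Nat.div_le_div_right (by omega)

lemma gapPhase_le_add_of_dvd_sub_one (ha : 1 ≤ a) (h : q ∣ a - 1) (hd : d % q + 1 < q) :
    gapPhase q L d ≤ gapPhase q L (d + a) := by
  have : (d + a) % q = d % q + 1 := by rw [Nat.add_mod_of_dvd_sub_one ha h, Nat.mod_eq_of_lt hd]
  have : d / L ≤ (d + a) / L := Nat.div_le_div_right (Nat.le_add_right d a)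
  exact Nat.div_le_div_right (by omega)

lemma isGapStar_of_gapPhase_lt (hq : 0 < q) (hL : 0 < L) (hd : d % q = 0)
    (h : gapPhase q L d < R) : IsGapStar q L R d := by
  rw [gapPhase, hd, add_zero, Nat.div_lt_iff_lt_mul hq, Nat.div_lt_iff_lt_mul hL] at h
  exact ⟨hd, h⟩

lemma isGapStar_of_min_gapPhase_add_eq_succ (hq : 0 < q) (hL : 0 < L) (ha : a ≤ L)
    (h : q ∣ a + 1) (he : min R (gapPhase q L (d + a)) = min R (gapPhase q L d) + 1) :
    IsGapStar q L R d := by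
  by_cases hu : d % q = 0
  · exact isGapStar_of_gapPhase_lt hq hL hu (by omega)
  · have := gapPhase_add_le_of_dvd_add_one hq hL ha h hu
    omega

lemma isGapStar_add_of_min_gapPhase_eq_succ (hq : 0 < q) (hL : 0 < L) (ha : 1 ≤ a)
    (h : q ∣ a - 1) (he : min R (gapPhase q L d) = min R (gapPhase q L (d + a)) + 1) :
    IsGapStar q L R (d + a) := by
  by_cases hu : d % q + 1 = q
  · have hda : (d + a) % q = 0 := by rw [Nat.add_mod_of_dvd_sub_one ha h, hu, Nat.mod_self]
    exact isGapStar_of_gapPhase_lt hq hL hda (by omega)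
  · have := gapPhase_le_add_of_dvd_sub_one (L := L) (d := d) ha h
      (by have := Nat.mod_lt d hq; omega)
    omega

theorem gapColor_ne_add (hq : 0 < q) (haL : a ≤ L) (hqa : ¬ q ∣ a) :
    gapColor q L R d ≠ gapColor q L R (d + a) := by
  have ha : 1 ≤ a := Nat.pos_of_ne_zero (by rintro rfl; exact hqa (dvd_zero q))
  have hL : 0 < L := by omega
  unfold gapColor
  split_ifs with hd hda hda
  · exact fun _ => hqa <| (Nat.dvd_add_right (Nat.dvd_of_mod_eq_zero hd.1)).mp
      (Nat.dvd_of_mod_eq_zero hda.1)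
  · simp
  · simp
  rw [Ne, Option.some_inj]
  intro heq
  have h₁ : gapPhase q L (d + a) ≤ gapPhase q L d + 1 := gapPhase_add_le hq hL haL
  have h₂ : gapPhase q L d ≤ gapPhase q L (d + a) + 1 := gapPhase_le_add hq
  rcases (by omega : min R (gapPhase q L (d + a)) = min R (gapPhase q L d) ∨
      min R (gapPhase q L (d + a)) = min R (gapPhase q L d) + 1 ∨
      min R (gapPhase q L d) = min R (gapPhase q L (d + a)) + 1) with he | he | he <;>
    rw [he] at heq <;> push_cast at heq
  · exact hqa <| (ZMod.natCast_eq_zero_iff a q).mp (by linear_combination -heq)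
  · have hdvd : q ∣ a + 1 :=
      (ZMod.natCast_eq_zero_iff _ q).mp (by push_cast; linear_combination -heq)
    exact hd (isGapStar_of_min_gapPhase_add_eq_succ hq hL haL hdvd he)
  · have hdvd : q ∣ a - 1 :=
      (ZMod.natCast_eq_zero_iff _ q).mp (by push_cast [Nat.cast_sub ha]; linear_combination -heq)
    exact hda (isGapStar_add_of_min_gapPhase_eq_succ hq hL ha hdvd he)

lemma gapColor_of_lt (hq : 0 < q) (hd : d < L) :
    gapColor q L R d = none ∨ gapColor q L R d = some (d : ZMod q) := by
  have hφ : gapPhase q L d = 0 := by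
    rw [gapPhase, Nat.div_eq_of_lt hd, zero_add, Nat.div_eq_of_lt (Nat.mod_lt d hq)]
  unfold gapColor
  split_ifs
  · exact .inl rfl
  · exact .inr (by rw [hφ, Nat.min_zero, add_zero])

lemma gapColor_of_le (hq : 0 < q) (hL : 0 < L) (hR : R ≤ q) (hd : q * q * L ≤ d) :
    gapColor q L R d = some ((d + R : ℕ) : ZMod q) := by
  have hφ : R ≤ gapPhase q L d := by
    have : q * q ≤ d / L := (Nat.le_div_iff_mul_le hL).mpr hd
    have : q ≤ d / L / q := (Nat.le_div_iff_mul_le hq).mpr (by rw [mul_comm]; exact this)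
    exact hR.trans (this.trans (Nat.div_le_div_right (Nat.le_add_right _ _)))
  have hstar : ¬ d < R * q * L :=
    not_lt.mpr ((Nat.mul_le_mul_right L (Nat.mul_le_mul_right q hR)).trans hd)
  rw [gapColor, if_neg (fun h => hstar h.2), min_eq_left hφ]

theorem gapColor_ne_of_add_eq (hq : 0 < q) (hqa : ¬ q ∣ a) {R' g j : ℕ}
    (hR : R ≤ q) (hRg : (R : ZMod q) = -g) (hd : q * q * L ≤ d) (hj : j < L)
    (hdj : d + a = g + j) : gapColor q L R d ≠ gapColor q L R' j := by
  have hdj' : (d : ZMod q) + a = g + j := by exact_mod_cast congrArg (Nat.cast : ℕ → ZMod q) hdj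
  rw [gapColor_of_le hq (by omega) hR hd]
  rcases gapColor_of_lt (R := R') hq hj with h | h <;> rw [h]
  · simp
  · rw [Ne, Option.some_inj]
    intro heq
    push_cast at heq
    exact hqa <| (ZMod.natCast_eq_zero_iff a q).mp (by linear_combination hdj' - heq + hRg)

end GapColor

section Markers

variable {X : Type*} [AddAction ℤ X]

def IsVAddSeparated (N : ℕ) (M : Set X) : Prop :=
  ∀ x ∈ M, ∀ s : ℤ, s ≠ 0 → |s| ≤ N → s +ᵥ x ∉ M

lemma IsVAddSeparated.mono {N : ℕ} {U V : Set X} (hU : IsVAddSeparated N U) (hVU : V ⊆ U) :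
    IsVAddSeparated N V :=
  fun x hx s hs hsN hsx => hU x (hVU hx) s hs hsN (hVU hsx)

structure IsMarkerSet (N : ℕ) (M : Set X) : Prop where
  isVAddSeparated : IsVAddSeparated N M
  exists_vadd_mem : ∀ x, ∃ s : ℤ, |s| ≤ N ∧ s +ᵥ x ∈ M

def greedyLayer (N : ℕ) (B : ℕ → Set X) (k : ℕ) : Set X :=
  {x | x ∈ B k ∧ IsVAddSeparated N (B k) ∧ ∀ j < k, ∀ s : ℤ, |s| ≤ N → s +ᵥ x ∉ greedyLayer N B j}

lemma mem_greedyLayer {N : ℕ} {B : ℕ → Set X} {k : ℕ} {x : X} :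
    x ∈ greedyLayer N B k ↔ x ∈ B k ∧ IsVAddSeparated N (B k) ∧
      ∀ j < k, ∀ s : ℤ, |s| ≤ N → s +ᵥ x ∉ greedyLayer N B j := by
  rw [greedyLayer]
  rfl

lemma isVAddSeparated_iUnion_greedyLayer (N : ℕ) (B : ℕ → Set X) :
    IsVAddSeparated N (⋃ k, greedyLayer N B k) := by
  simp only [IsVAddSeparated, Set.mem_iUnion]
  rintro x ⟨k, hx⟩ s hs hsN ⟨j, hsx⟩
  rw [mem_greedyLayer] at hx hsx
  rcases lt_trichotomy j k with hjk | rfl | hkj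
  · exact hx.2.2 j hjk s hsN (mem_greedyLayer.mpr hsx)
  · exact hx.2.1 x hx.1 s hs hsN hsx.1
  · refine hsx.2.2 k hkj (-s) (by rwa [abs_neg]) ?_
    rw [neg_vadd_vadd]
    exact mem_greedyLayer.mpr hx

lemma exists_vadd_mem_iUnion_greedyLayer {N : ℕ} {B : ℕ → Set X} {x : X} {k : ℕ}
    (hx : x ∈ B k) (hB : IsVAddSeparated N (B k)) :
    ∃ s : ℤ, |s| ≤ N ∧ s +ᵥ x ∈ ⋃ k, greedyLayer N B k := by
  by_cases hk : x ∈ greedyLayer N B k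
  · exact ⟨0, by simp, Set.mem_iUnion.mpr ⟨k, by rwa [zero_vadd]⟩⟩
  · rw [mem_greedyLayer] at hk
    simp only [hx, hB, true_and, not_forall, not_not] at hk
    obtain ⟨j, -, s, hsN, hs⟩ := hk
    exact ⟨s, hsN, Set.mem_iUnion.mpr ⟨j, hs⟩⟩

lemma measurableSet_greedyLayer [MeasurableSpace X] [MeasurableConstVAdd ℤ X] (N : ℕ)
    {B : ℕ → Set X} (hB : ∀ k, MeasurableSet (B k)) (k : ℕ) :
    MeasurableSet (greedyLayer N B k) := by
  induction k using Nat.strong_induction_on with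
  | _ k ih =>
    have : greedyLayer N B k = B k ∩ {_x | IsVAddSeparated N (B k)} ∩
        ⋂ j ∈ Finset.range k, ⋂ s ∈ Finset.Icc (-(N : ℤ)) N, (s +ᵥ ·) ⁻¹' (greedyLayer N B j)ᶜ := by
      ext x
      simp only [mem_greedyLayer (x := x), Set.mem_inter_iff, Set.mem_ofPred_eq, Set.mem_iInter,
        and_assoc, Finset.mem_range, Finset.mem_Icc, ← abs_le, Set.mem_preimage,
        Set.mem_compl_iff]
    rw [this]
    exact ((hB k).inter (.const _)).inter <| .biInter (Set.to_countable _) fun j hj =>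
      .biInter (Set.to_countable _) fun s _ =>
        measurable_const_vadd s ((ih j (Finset.mem_range.mp hj)).compl)

variable [TopologicalSpace X] [T2Space X] [ContinuousConstVAdd ℤ X]

lemma exists_isOpen_isVAddSeparated_mem (hfree : ∀ (s : ℤ) (x : X), s +ᵥ x = x → s = 0)
    (N : ℕ) (x : X) : ∃ U : Set X, IsOpen U ∧ x ∈ U ∧ IsVAddSeparated N U := by
  have hsep : ∀ s : ℤ, ∃ V : Set X, IsOpen V ∧ x ∈ V ∧ (s ≠ 0 → ∀ y ∈ V, s +ᵥ y ∉ V) := by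
    intro s
    by_cases hs : s = 0
    · exact ⟨Set.univ, isOpen_univ, trivial, fun h => absurd hs h⟩
    obtain ⟨V, W, hV, hW, hxV, hxW, hVW⟩ := t2_separation fun h => hs (hfree s x h.symm)
    exact ⟨V ∩ (s +ᵥ ·) ⁻¹' W, hV.inter (hW.preimage (continuous_const_vadd s)), ⟨hxV, hxW⟩,
      fun _ y hy hsy => hVW.ne_of_mem hsy.1 hy.2 rfl⟩
  choose V hV using hsep
  refine ⟨⋂ s ∈ Finset.Icc (-(N : ℤ)) N, V s, isOpen_biInter_finset fun s _ => (hV s).1,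
    Set.mem_iInter₂.mpr fun s _ => (hV s).2.1, fun y hy s hs hsN hsy => ?_⟩
  have hmem : s ∈ Finset.Icc (-(N : ℤ)) N := Finset.mem_Icc.mpr (abs_le.mp hsN)
  exact (hV s).2.2 hs y (Set.mem_iInter₂.mp hy s hmem) (Set.mem_iInter₂.mp hsy s hmem)

theorem exists_measurableSet_isMarkerSet [SecondCountableTopology X] [MeasurableSpace X]
    [OpensMeasurableSpace X] [MeasurableConstVAdd ℤ X]
    (hfree : ∀ (s : ℤ) (x : X), s +ᵥ x = x → s = 0) (N : ℕ) :
    ∃ M : Set X, MeasurableSet M ∧ IsMarkerSet N M := by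
  obtain ⟨B, hB⟩ := TopologicalSpace.exists_seq_basis X
  refine ⟨⋃ k, greedyLayer N B k,
    .iUnion (measurableSet_greedyLayer N fun k => (hB.isOpen ⟨k, rfl⟩).measurableSet),
    isVAddSeparated_iUnion_greedyLayer N B, fun x => ?_⟩
  obtain ⟨U, hU, hxU, hUsep⟩ := exists_isOpen_isVAddSeparated_mem hfree N x
  obtain ⟨_, ⟨k, rfl⟩, hxk, hkU⟩ := hB.exists_subset_of_mem_open hxU hU
  exact exists_vadd_mem_iUnion_greedyLayer hxk (hUsep.mono hkU)

end Markers

namespace IsMarkerSet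

variable {X : Type*} [AddAction ℤ X] {N : ℕ} {M : Set X} (hM : IsMarkerSet N M)
include hM

open Classical

lemma exists_neg_vadd_mem (x : X) : ∃ d : ℕ, (-(d : ℤ)) +ᵥ x ∈ M := by
  obtain ⟨s, hsN, hs⟩ := hM.exists_vadd_mem ((-(N : ℤ)) +ᵥ x)
  refine ⟨(N - s).toNat, ?_⟩
  rwa [vadd_vadd, show s + -(N : ℤ) = -((N - s).toNat : ℤ) by have := abs_le.mp hsN; omega] at hs

lemma exists_pos_vadd_mem (x : X) : ∃ e : ℕ, 0 < e ∧ (e : ℤ) +ᵥ x ∈ M := by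
  obtain ⟨s, hsN, hs⟩ := hM.exists_vadd_mem (((N : ℤ) + 1) +ᵥ x)
  have := abs_le.mp hsN
  refine ⟨(N + 1 + s).toNat, by omega, ?_⟩
  rwa [vadd_vadd, show s + ((N : ℤ) + 1) = ((N + 1 + s).toNat : ℤ) by omega] at hs

/-- `prevDist` counts back to a marker at or before `x`, `nextDist` forward to one strictly after
it, so that `prevDist x + nextDist x` is the length of the gap containing `x`. -/
noncomputable def prevDist (x : X) : ℕ := Nat.find (hM.exists_neg_vadd_mem x)

noncomputable def nextDist (x : X) : ℕ := Nat.find (hM.exists_pos_vadd_mem x)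

lemma neg_prevDist_vadd_mem (x : X) : (-(hM.prevDist x : ℤ)) +ᵥ x ∈ M :=
  Nat.find_spec (hM.exists_neg_vadd_mem x)

lemma nextDist_pos (x : X) : 0 < hM.nextDist x :=
  (Nat.find_spec (hM.exists_pos_vadd_mem x)).1

lemma nextDist_vadd_mem (x : X) : (hM.nextDist x : ℤ) +ᵥ x ∈ M :=
  (Nat.find_spec (hM.exists_pos_vadd_mem x)).2

lemma vadd_notMem_of_lt_of_lt {x : X} {t : ℤ} (h₁ : -(hM.prevDist x : ℤ) < t)
    (h₂ : t < hM.nextDist x) : t +ᵥ x ∉ M := by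
  rcases le_or_gt t 0 with ht | ht
  · have := Nat.find_min (hM.exists_neg_vadd_mem x) (m := t.natAbs)
      (by unfold prevDist at h₁; omega)
    rwa [show -(t.natAbs : ℤ) = t by omega] at this
  · have := Nat.find_min (hM.exists_pos_vadd_mem x) (m := t.natAbs)
      (by unfold nextDist at h₂; omega)
    rwa [show (t.natAbs : ℤ) = t by omega, not_and, imp_iff_right (by omega)] at this

lemma lt_prevDist_add_nextDist (x : X) : N < hM.prevDist x + hM.nextDist x := by
  by_contra! h
  refine hM.isVAddSeparated _ (hM.neg_prevDist_vadd_mem x) (hM.prevDist x + hM.nextDist x)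
    (by have := hM.nextDist_pos x; omega) (by rw [abs_le]; omega) ?_
  convert hM.nextDist_vadd_mem x using 1
  rw [vadd_vadd]
  ring_nf

lemma prevDist_vadd_of_lt {x : X} {a : ℕ} (ha : a < hM.nextDist x) :
    hM.prevDist ((a : ℤ) +ᵥ x) = hM.prevDist x + a := by
  rw [prevDist, Nat.find_eq_iff]
  simp only [vadd_vadd]
  refine ⟨?_, fun n hn => hM.vadd_notMem_of_lt_of_lt (by omega) (by omega)⟩
  rw [show -((hM.prevDist x + a : ℕ) : ℤ) + a = -(hM.prevDist x : ℤ) by push_cast; ring]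
  exact hM.neg_prevDist_vadd_mem x

lemma nextDist_vadd_of_lt {x : X} {a : ℕ} (ha : a < hM.nextDist x) :
    hM.nextDist ((a : ℤ) +ᵥ x) = hM.nextDist x - a := by
  rw [nextDist, Nat.find_eq_iff]
  simp only [vadd_vadd]
  refine ⟨⟨by omega, ?_⟩, fun n hn hn' => hM.vadd_notMem_of_lt_of_lt (by omega) (by omega) hn'.2⟩
  rw [show ((hM.nextDist x - a : ℕ) : ℤ) + a = hM.nextDist x by omega]
  exact hM.nextDist_vadd_mem x

lemma prevDist_vadd_of_le {x : X} {a : ℕ} (ha : hM.nextDist x ≤ a) (haN : a ≤ N) :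
    hM.prevDist ((a : ℤ) +ᵥ x) = a - hM.nextDist x := by
  rw [prevDist, Nat.find_eq_iff]
  simp only [vadd_vadd]
  refine ⟨?_, fun n hn hmem => ?_⟩
  · rw [show -((a - hM.nextDist x : ℕ) : ℤ) + a = hM.nextDist x by omega]
    exact hM.nextDist_vadd_mem x
  refine hM.isVAddSeparated _ (hM.nextDist_vadd_mem x) (a - n - hM.nextDist x) (by omega)
    (by rw [abs_le]; omega) ?_
  rwa [vadd_vadd, show (a : ℤ) - n - hM.nextDist x + hM.nextDist x = -(n : ℤ) + a by ring]

variable [MeasurableSpace X] [MeasurableConstVAdd ℤ X]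

lemma measurable_prevDist (hMm : MeasurableSet M) : Measurable hM.prevDist :=
  measurable_find _ fun _ => measurable_const_vadd _ hMm

lemma measurable_nextDist (hMm : MeasurableSet M) : Measurable hM.nextDist :=
  measurable_find _ fun _ => (MeasurableSet.const _).inter (measurable_const_vadd _ hMm)

end IsMarkerSet

theorem exists_measurable_coloring_of_forall_not_dvd {X : Type*} [TopologicalSpace X] [T2Space X]
    [SecondCountableTopology X] [MeasurableSpace X] [OpensMeasurableSpace X] [AddAction ℤ X]
    [ContinuousConstVAdd ℤ X] [MeasurableConstVAdd ℤ X]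
    (hfree : ∀ (s : ℤ) (x : X), s +ᵥ x = x → s = 0) (q : ℕ) [NeZero q] (A : Finset ℕ)
    (hA : ∀ a ∈ A, ¬ q ∣ a) :
    ∃ c : X → Fin (q + 1), Measurable c ∧ ∀ x, ∀ a ∈ A, c x ≠ c ((a : ℤ) +ᵥ x) := by
  set L := A.sup id
  -- with gaps longer than `q * q * L + L`, a step `a ≤ L` across a marker starts at a position
  -- `≥ q * q * L`, where the colouring of the gap has settled (`gapColor_of_le`)
  obtain ⟨M, hMm, hM⟩ := exists_measurableSet_isMarkerSet hfree (q * q * L + L)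
  let e : Option (ZMod q) ≃ Fin (q + 1) :=
    (Equiv.optionCongr (ZMod.finEquiv q).symm.toEquiv).trans (finSuccEquiv q).symm
  let F (p : ℕ × ℕ) : Fin (q + 1) := e (gapColor q L (-((p.1 + p.2 : ℕ) : ZMod q)).val p.1)
  refine ⟨F ∘ fun x => (hM.prevDist x, hM.nextDist x), (measurable_of_countable F).comp
    ((hM.measurable_prevDist hMm).prodMk (hM.measurable_nextDist hMm)), fun x a ha => ?_⟩
  have hq := NeZero.pos q
  have haL : a ≤ L := Finset.le_sup (f := id) ha
  refine e.injective.ne ?_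
  dsimp only [Function.comp_apply]
  rcases lt_or_ge a (hM.nextDist x) with hlt | hle
  · rw [hM.prevDist_vadd_of_lt hlt, hM.nextDist_vadd_of_lt hlt,
      show hM.prevDist x + a + (hM.nextDist x - a) = hM.prevDist x + hM.nextDist x by omega]
    exact gapColor_ne_add hq haL (hA a ha)
  · have hgap := hM.lt_prevDist_add_nextDist x
    have hnext := hM.nextDist_pos x
    rw [hM.prevDist_vadd_of_le hle (by omega)]
    exact gapColor_ne_of_add_eq hq (hA a ha) (ZMod.val_lt _).le (ZMod.natCast_zmod_val _)
      (by omega) (by omega) (by omega)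

lemma shift_shift {α : Type*} (s t : ℤ) (x : ℤ → α) : shift s (shift t x) = shift (s + t) x :=
  funext fun n => by simp only [shift, add_assoc]

lemma shift_zero {α : Type*} (x : ℤ → α) : shift 0 x = x :=
  funext fun n => by simp only [shift, add_zero]

lemma shift_mem_freePart {x : ℤ → Bool} (hx : x ∈ FreePart) (s : ℤ) : shift s x ∈ FreePart :=
  fun t ht h => hx t ht <| by
    have := congrArg (shift (-s)) h
    rwa [shift_shift, shift_shift, shift_shift, neg_add_cancel, shift_zero,
      neg_add_cancel_comm] at this

instance : AddAction ℤ {x : ℤ → Bool // x ∈ FreePart} where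
  vadd s x := ⟨shift s x.1, shift_mem_freePart x.2 s⟩
  zero_vadd x := Subtype.ext (shift_zero x.1)
  add_vadd s t x := Subtype.ext (shift_shift s t x.1).symm

instance : ContinuousConstVAdd ℤ {x : ℤ → Bool // x ∈ FreePart} where
  continuous_const_vadd s :=
    continuous_induced_rng.mpr <|
      continuous_pi fun n => (continuous_apply (n + s)).comp continuous_subtype_val

lemma FreePart.eq_zero_of_vadd_eq {s : ℤ} {x : {x : ℤ → Bool // x ∈ FreePart}} (h : s +ᵥ x = x) :
    s = 0 :=
  by_contra fun hs => x.2 s hs (congrArg Subtype.val h)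

theorem borelChromatic_le_of_avoiding_multiples_general
    (A : Finset ℕ) (m : ℕ) (hdvd : ∀ a ∈ A, ¬ (m + 1) ∣ a) :
    (∃ c : {x : ℤ → Bool // x ∈ FreePart} → Fin (m + 2), IsBorelColoring A c) ∧
    borelChromatic A ≤ m + 2 := by
  obtain ⟨c, hc, hne⟩ := exists_measurable_coloring_of_forall_not_dvd
    (fun _ _ => FreePart.eq_zero_of_vadd_eq) (m + 1) A hdvd
  have hcol : IsBorelColoring A c := ⟨hc, fun x a ha _ => hne x a ha⟩
  exact ⟨⟨c, hcol⟩, Nat.sInf_le ⟨c, hcol⟩⟩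

/-- If `m ≥ 1` and no element of `A` is divisible by `m + 1`
(i.e. `S ∩ (m+1)ℤ = ∅`), then `χ(a₁,…,aₙ) ≤ m + 2`: there is a Borel proper
`(m+2)`-coloring of `G_S` on `F(2^ℤ)`. -/
theorem borelChromatic_le_of_avoiding_multiples
    (A : Finset ℕ) (hA : A.Nonempty) (hpos : ∀ a ∈ A, 0 < a) (hgcd : A.gcd id = 1)
    (m : ℕ) (hm : 1 ≤ m) (hdvd : ∀ a ∈ A, ¬ (m + 1) ∣ a) :
    (∃ c : {x : ℤ → Bool // x ∈ FreePart} → Fin (m + 2), IsBorelColoring A c) ∧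
    borelChromatic A ≤ m + 2 :=
  borelChromatic_le_of_avoiding_multiples_general A m hdvd
end
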